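/- arXiv:1710.10936 — 2 statements merged into one kernel-verified Lean document; each statement's English description precedes it below -/
import Mathlib

section
/- Let A and P be symmetric n×n real matrices. Suppose Û ∈ ℝ^{n×d} has orthonormal columns that are eigenvectors of A with invertible diagonal eigenvalue matrix Λ̂ (i.e., AÛ = ÛΛ̂), and suppose ‖(A−P)Λ̂^{-1}‖ < 1 in operator norm. Then Û = Σ_{k=0}^∞ (A−P)^k P Û Λ̂^{-(k+1)}, where the series converges in operator norm. -/
open Matrix

/-- The ℓ₂→ℓ₂ operator (spectral) norm of a real matrix. -/
noncomputable def l2OpNorm {a b : ℕ} (M : Matrix (Fin a) (Fin b) ℝ) : ℝ :=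
  ‖LinearMap.toContinuousLinearMap (Matrix.toEuclideanLin M)‖

open scoped Matrix.Norms.L2Operator in
lemma l2OpNorm_eq_norm {a b : ℕ} (M : Matrix (Fin a) (Fin b) ℝ) : l2OpNorm M = ‖M‖ := rfl

open scoped Matrix.Norms.L2Operator in
/-- If `Û` has orthonormal columns of eigenvectors of the symmetric
matrix `A` with invertible diagonal eigenvalue matrix `Λ̂` (`AÛ = ÛΛ̂`), and
`‖A − P‖·‖Λ̂⁻¹‖ < 1` in operator norm, then
`Û = Σ_{k=0}^∞ (A−P)^k P Û Λ̂^{-(k+1)}`, the series converging (in norm). -/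
theorem stmt_4 {n d : ℕ} (A P : Matrix (Fin n) (Fin n) ℝ)
    (Uh : Matrix (Fin n) (Fin d) ℝ) (Λ : Fin d → ℝ)
    (hA : A.IsSymm) (hP : P.IsSymm)
    (hUh : Uhᵀ * Uh = 1) (hΛ : ∀ i, Λ i ≠ 0)
    (hAU : A * Uh = Uh * Matrix.diagonal Λ)
    (hnorm : l2OpNorm (A - P) * l2OpNorm ((Matrix.diagonal Λ)⁻¹) < 1) :
    HasSum (fun k : ℕ => (A - P) ^ k * P * Uh * (Matrix.diagonal Λ)⁻¹ ^ (k + 1)) Uh := by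
  set E := A - P with hE
  set D := (Matrix.diagonal Λ)⁻¹ with hDdef
  set f : ℕ → Matrix (Fin n) (Fin d) ℝ := fun k => E ^ k * P * Uh * D ^ (k + 1) with hf
  set g : ℕ → Matrix (Fin n) (Fin d) ℝ := fun k => E ^ k * Uh * D ^ k with hg
  set r : ℝ := ‖E‖ * ‖D‖ with hr
  have hr0 : 0 ≤ r := mul_nonneg (norm_nonneg _) (norm_nonneg _)
  have hr1 : r < 1 := by
    simpa only [l2OpNorm_eq_norm] using hnorm
  -- `diagonal Λ` is invertible
  have hdet : IsUnit (Matrix.diagonal Λ).det := by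
    rw [Matrix.det_diagonal]
    exact (Finset.prod_ne_zero_iff.mpr fun i _ => hΛ i).isUnit
  have hD : Matrix.diagonal Λ * D = 1 := Matrix.mul_nonsing_inv _ hdet
  -- key algebraic identity: `P * Uh = Uh * diagonal Λ - E * Uh`
  have hPU : P * Uh = Uh * Matrix.diagonal Λ - E * Uh := by
    rw [hE, Matrix.sub_mul, hAU]
    exact (sub_sub_cancel _ _).symm
  have hDpow : ∀ k : ℕ, Matrix.diagonal Λ * D ^ (k + 1) = D ^ k := by
    intro k
    rw [pow_succ' D k, ← Matrix.mul_assoc, hD, Matrix.one_mul]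
  -- telescoping identity
  have hkey : ∀ k, f k = g k - g (k + 1) := by
    intro k
    simp only [hf, hg]
    rw [Matrix.mul_assoc (E ^ k) P Uh, hPU, Matrix.mul_sub, Matrix.sub_mul]
    congr 1
    · simp only [Matrix.mul_assoc]
      rw [hDpow k]
    · rw [← Matrix.mul_assoc (E ^ k) E Uh, ← pow_succ]
  -- recursions and norm bounds
  have hfrec : ∀ k, f (k + 1) = E * f k * D := by
    intro k
    simp only [hf]
    rw [pow_succ' E k, pow_succ D (k + 1)]
    simp only [Matrix.mul_assoc]
  have hgrec : ∀ k, g (k + 1) = E * g k * D := by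
    intro k
    simp only [hg]
    rw [pow_succ' E k, pow_succ D k]
    simp only [Matrix.mul_assoc]
  have hstep : ∀ (M : Matrix (Fin n) (Fin d) ℝ), ‖E * M * D‖ ≤ r * ‖M‖ := by
    intro M
    calc ‖E * M * D‖ ≤ ‖E * M‖ * ‖D‖ := Matrix.l2_opNorm_mul _ _
      _ ≤ ‖E‖ * ‖M‖ * ‖D‖ :=
        mul_le_mul_of_nonneg_right (Matrix.l2_opNorm_mul _ _) (norm_nonneg _)
      _ = r * ‖M‖ := by ring
  have hfbound : ∀ k, ‖f k‖ ≤ ‖f 0‖ * r ^ k := by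
    intro k
    induction k with
    | zero => simp
    | succ k ih =>
      calc ‖f (k + 1)‖ = ‖E * f k * D‖ := by rw [hfrec]
        _ ≤ r * ‖f k‖ := hstep _
        _ ≤ r * (‖f 0‖ * r ^ k) := mul_le_mul_of_nonneg_left ih hr0
        _ = ‖f 0‖ * r ^ (k + 1) := by ring
  have hgbound : ∀ k, ‖g k‖ ≤ ‖g 0‖ * r ^ k := by
    intro k
    induction k with
    | zero => simp
    | succ k ih =>
      calc ‖g (k + 1)‖ = ‖E * g k * D‖ := by rw [hgrec]
        _ ≤ r * ‖g k‖ := hstep _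
        _ ≤ r * (‖g 0‖ * r ^ k) := mul_le_mul_of_nonneg_left ih hr0
        _ = ‖g 0‖ * r ^ (k + 1) := by ring
  -- summability
  have hsummable : Summable f := by
    apply Summable.of_norm_bounded (g := fun k => ‖f 0‖ * r ^ k)
      ((summable_geometric_of_lt_one hr0 hr1).mul_left _)
    exact hfbound
  -- the value of g at 0
  have hg0 : g 0 = Uh := by simp [hg]
  -- partial sums
  have hpartial : ∀ N, ∑ k ∈ Finset.range N, f k = Uh - g N := by
    intro N
    calc ∑ k ∈ Finset.range N, f k = ∑ k ∈ Finset.range N, (g k - g (k + 1)) := by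
          exact Finset.sum_congr rfl fun k _ => hkey k
      _ = g 0 - g N := Finset.sum_range_sub' g N
      _ = Uh - g N := by rw [hg0]
  -- convergence of partial sums to Uh
  have hgtend : Filter.Tendsto g Filter.atTop (nhds 0) := by
    apply squeeze_zero_norm hgbound
    have := (tendsto_pow_atTop_nhds_zero_of_lt_one hr0 hr1).const_mul (‖g 0‖)
    simpa using this
  have htend : Filter.Tendsto (fun N => ∑ k ∈ Finset.range N, f k) Filter.atTop (nhds Uh) := by
    simp only [hpartial]
    have : Filter.Tendsto (fun N => Uh - g N) Filter.atTop (nhds (Uh - 0)) :=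
      tendsto_const_nhds.sub hgtend
    simpa using this
  exact (hsummable.hasSum_iff_tendsto_nat).mpr htend
end

section
/- Let B ∈ ℝ^{K×K} be symmetric and invertible with B = ν I_{p,q} ν^⊤ for an invertible K×K matrix ν with rows ν_1,…,ν_K, and let π_1,…,π_K > 0. Define Δ = Σ_k π_k ν_k ν_k^⊤ and θ_{kℓ} = Σ_r π_r (B_{kr}(1−B_{kr}) + B_{ℓr}(1−B_{ℓr})) ν_k^⊤ Δ^{-1} I_{p,q} Δ^{-1} ν_ℓ − Σ_{r,s} π_r π_s B_{sr}(1−B_{sr}) ν_s^⊤ Δ^{-1} I_{p,q} Δ^{-1} (ν_ℓ ν_k^⊤ + ν_k ν_ℓ^⊤) Δ^{-1} ν_s. Then θ_{kℓ} = 0 for all k, ℓ ∈ [K]. -/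
open Matrix

lemma dot_sandwich {n : ℕ} (ν A : Matrix (Fin n) (Fin n) ℝ) (r s : Fin n) :
    ν r ⬝ᵥ A *ᵥ ν s = (ν * A * νᵀ) r s := by
  simp [Matrix.mul_apply, dotProduct, Matrix.mulVec, Finset.sum_mul, Finset.mul_sum]
  rw [Finset.sum_comm]
  ring_nf

lemma vmv_mulVec {n : ℕ} (a b x : Fin n → ℝ) :
    Matrix.vecMulVec a b *ᵥ x = (b ⬝ᵥ x) • a := by
  ext i
  simp [Matrix.vecMulVec_apply, Matrix.mulVec, dotProduct, Finset.mul_sum, mul_assoc]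
  rw [Finset.sum_mul]
  exact Finset.sum_congr rfl fun _ _ => by ring


/-- For `B = ν I_{p,q} ν^⊤` symmetric invertible with `ν` invertible,
`π_k > 0`, `Δ = Σ_k π_k ν_k ν_k^⊤`, the bias term
`θ_{kℓ} = Σ_r π_r (B_{kr}(1−B_{kr}) + B_{ℓr}(1−B_{ℓr})) ν_k^⊤ Δ⁻¹ I_{p,q} Δ⁻¹ ν_ℓ
 − Σ_{r,s} π_r π_s B_{sr}(1−B_{sr}) ν_s^⊤ Δ⁻¹ I_{p,q} Δ⁻¹ (ν_ℓ ν_k^⊤ + ν_k ν_ℓ^⊤) Δ⁻¹ ν_s`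
vanishes for all `k, ℓ`. -/
theorem stmt_16 {K p q : ℕ} (B ν : Matrix (Fin K) (Fin K) ℝ)
    (hBsymm : B.IsSymm) (hBinv : IsUnit B.det) (hνinv : IsUnit ν.det)
    (ε : Fin K → ℝ) (hε : ∀ i, ε i = 1 ∨ ε i = -1)
    (hp : (Finset.univ.filter fun i => ε i = 1).card = p)
    (hq : (Finset.univ.filter fun i => ε i = -1).card = q)
    (hpq : p + q = K)
    (hB : B = ν * Matrix.diagonal ε * νᵀ)
    (π : Fin K → ℝ) (hπ : ∀ k, 0 < π k)
    (Δ : Matrix (Fin K) (Fin K) ℝ)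
    (hΔ : Δ = ∑ k, π k • Matrix.vecMulVec (ν k) (ν k))
    (θ : Fin K → Fin K → ℝ)
    (hθ : ∀ k l, θ k l =
      (∑ r, π r * (B k r * (1 - B k r) + B l r * (1 - B l r)) *
        (ν k ⬝ᵥ (Δ⁻¹ * Matrix.diagonal ε * Δ⁻¹) *ᵥ ν l))
      - ∑ r, ∑ s, π r * π s * B s r * (1 - B s r) *
        (ν s ⬝ᵥ (Δ⁻¹ * Matrix.diagonal ε * Δ⁻¹ *
          (Matrix.vecMulVec (ν l) (ν k) + Matrix.vecMulVec (ν k) (ν l)) * Δ⁻¹) *ᵥ ν s)) :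
    ∀ k l, θ k l = 0 := by
  have hπne : ∀ k, π k ≠ 0 := fun k => (hπ k).ne'
  have hνT : IsUnit νᵀ.det := by rwa [Matrix.det_transpose]
  have hΔ' : Δ = νᵀ * Matrix.diagonal π * ν := by
    rw [hΔ]
    ext i j
    simp [Matrix.mul_apply, Matrix.diagonal_apply, Matrix.sum_apply,
      Matrix.vecMulVec_apply, Finset.sum_ite_eq, Finset.mul_sum]
    exact Finset.sum_congr rfl fun _ _ => by ring
  have hDinv : (Matrix.diagonal π)⁻¹ = Matrix.diagonal (fun i => (π i)⁻¹) := by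
    apply Matrix.inv_eq_right_inv
    rw [Matrix.diagonal_mul_diagonal]
    simp [hπne]
  have hΔinv : Δ⁻¹ = ν⁻¹ * Matrix.diagonal (fun i => (π i)⁻¹) * νᵀ⁻¹ := by
    rw [hΔ', Matrix.mul_inv_rev, Matrix.mul_inv_rev, hDinv, Matrix.mul_assoc]
  have key1 : ν * Δ⁻¹ * νᵀ = Matrix.diagonal (fun i => (π i)⁻¹) := by
    rw [hΔinv,
      show ν * (ν⁻¹ * Matrix.diagonal (fun i => (π i)⁻¹) * νᵀ⁻¹) * νᵀ
        = (ν * ν⁻¹) * Matrix.diagonal (fun i => (π i)⁻¹) * (νᵀ⁻¹ * νᵀ) by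
      simp only [Matrix.mul_assoc],
      Matrix.mul_nonsing_inv _ hνinv, Matrix.nonsing_inv_mul _ hνT]
    simp
  -- M := Δ⁻¹ diag ε Δ⁻¹ ; key2 : ν M νᵀ = diag π⁻¹ * B⁻¹ * diag π⁻¹
  set M := Δ⁻¹ * Matrix.diagonal ε * Δ⁻¹ with hM
  have hεinv : (Matrix.diagonal ε)⁻¹ = Matrix.diagonal ε := by
    apply Matrix.inv_eq_right_inv
    rw [Matrix.diagonal_mul_diagonal]
    have : (fun i => ε i * ε i) = fun _ => (1:ℝ) := by
      funext i; rcases hε i with h | h <;> rw [h] <;> norm_num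
    rw [this]; simp [Matrix.diagonal_one]
  have hBinv' : B⁻¹ = νᵀ⁻¹ * Matrix.diagonal ε * ν⁻¹ := by
    rw [hB, Matrix.mul_inv_rev, Matrix.mul_inv_rev, hεinv, Matrix.mul_assoc]
  have key2 : ν * M * νᵀ =
      Matrix.diagonal (fun i => (π i)⁻¹) * B⁻¹ * Matrix.diagonal (fun i => (π i)⁻¹) := by
    rw [hM, hΔinv, hBinv']
    rw [show ν * (ν⁻¹ * Matrix.diagonal (fun i => (π i)⁻¹) * νᵀ⁻¹ * Matrix.diagonal ε *
          (ν⁻¹ * Matrix.diagonal (fun i => (π i)⁻¹) * νᵀ⁻¹)) * νᵀ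
        = (ν * ν⁻¹) * Matrix.diagonal (fun i => (π i)⁻¹) * (νᵀ⁻¹ * Matrix.diagonal ε * ν⁻¹) *
          Matrix.diagonal (fun i => (π i)⁻¹) * (νᵀ⁻¹ * νᵀ) by
      simp only [Matrix.mul_assoc],
      Matrix.mul_nonsing_inv _ hνinv, Matrix.nonsing_inv_mul _ hνT]
    simp [Matrix.mul_assoc]
  -- scalar facts
  have h1 : ∀ r s : Fin K, ν r ⬝ᵥ Δ⁻¹ *ᵥ ν s = if r = s then (π r)⁻¹ else 0 := by
    intro r s
    rw [dot_sandwich, key1, Matrix.diagonal_apply]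
  have hc : ∀ r s : Fin K, ν r ⬝ᵥ M *ᵥ ν s = (π r)⁻¹ * B⁻¹ r s * (π s)⁻¹ := by
    intro r s
    rw [dot_sandwich, key2]
    simp [Matrix.mul_apply, Matrix.diagonal_apply, Finset.sum_ite_eq, Finset.sum_ite_eq']
  have hCsymm : ∀ r s : Fin K, B⁻¹ r s = B⁻¹ s r := by
    intro r s
    have : (B⁻¹)ᵀ = B⁻¹ := by
      rw [Matrix.transpose_nonsing_inv, hBsymm.eq]
    conv_lhs => rw [← this]
    rfl
  intro k l
  rw [hθ]
  have hrw : ∀ s : Fin K,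
      ν s ⬝ᵥ (M * (Matrix.vecMulVec (ν l) (ν k) + Matrix.vecMulVec (ν k) (ν l)) * Δ⁻¹) *ᵥ ν s
      = (if k = s then (π k)⁻¹ * (ν s ⬝ᵥ M *ᵥ ν l) else 0)
        + (if l = s then (π l)⁻¹ * (ν s ⬝ᵥ M *ᵥ ν k) else 0) := by
    intro s
    rw [Matrix.mul_add, Matrix.add_mul, Matrix.add_mulVec, dotProduct_add]
    congr 1
    · rw [show (M * Matrix.vecMulVec (ν l) (ν k) * Δ⁻¹) *ᵥ ν s
          = M *ᵥ (Matrix.vecMulVec (ν l) (ν k) *ᵥ (Δ⁻¹ *ᵥ ν s)) by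
        simp [Matrix.mulVec_mulVec, Matrix.mul_assoc],
        vmv_mulVec, h1 k s]
      split <;> simp [Matrix.mulVec_smul, dotProduct_smul, smul_eq_mul]
    · rw [show (M * Matrix.vecMulVec (ν k) (ν l) * Δ⁻¹) *ᵥ ν s
          = M *ᵥ (Matrix.vecMulVec (ν k) (ν l) *ᵥ (Δ⁻¹ *ᵥ ν s)) by
        simp [Matrix.mulVec_mulVec, Matrix.mul_assoc],
        vmv_mulVec, h1 l s]
      split <;> simp [Matrix.mulVec_smul, dotProduct_smul, smul_eq_mul]
  -- now the double sum
  have hsum : ∀ r : Fin K,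
      (∑ s, π r * π s * B s r * (1 - B s r) *
        (ν s ⬝ᵥ (M * (Matrix.vecMulVec (ν l) (ν k) + Matrix.vecMulVec (ν k) (ν l)) * Δ⁻¹) *ᵥ ν s))
      = π r * (B k r * (1 - B k r) + B l r * (1 - B l r)) * (ν k ⬝ᵥ M *ᵥ ν l) := by
    intro r
    simp only [hrw]
    simp only [mul_add, mul_ite, mul_zero, Finset.sum_add_distrib,
      Finset.sum_ite_eq, Finset.mem_univ, if_true]
    rw [hc k l, hc l k, hCsymm l k]
    field_simp [hπne k, hπne l]
  rw [Finset.sum_congr rfl fun r _ => hsum r]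
  ring
end
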